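/- arXiv:1602.03266 — 4 statements merged into one kernel-verified Lean document; each statement's English description precedes it below -/
import Mathlib

section
/- The Skorokhod distance between two continuous traces equals the Fréchet distance between their time-explicit curves: for continuous f : [a,b] → ℝ^d and g : [c,e] → ℝ^d, d_S(f,g) = d_F(C_f, C_g), where C_f(t) = (f(t), t), C_g(t) = (g(t), t), the Skorokhod distance uses a norm L on ℝ^d, and the Fréchet distance uses the norm ‖(p,t)‖ = max(‖p‖_L, |t|) on ℝ^{d+1}. -/
/-!
A retiming `r` and a pair of reparametrisations `(α₁, α₂)` both describe a monotone coupling of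
the time axes `[a,b]` and `[c,e]`, and both distances are infima of the supremum of the cost
`max (L (f s - g t)) |s - t|` over such a coupling. A retiming `r` gives the graph of `r`, which is
traced by `α₁` the affine parametrisation of `[a,b]` and `α₂ = r ∘ α₁`; conversely `(α₁, α₂)`
traces the graph of the retiming `α₂ ∘ α₁⁻¹`. Continuity of a retiming is automatic, since a
monotone map of one interval onto another is continuous. Finally `L` is a seminorm on a
finite-dimensional space, hence continuous, so all suprema involved are finite and the supremum of
a maximum is the maximum of the suprema.
-/

open Set

theorem sSup_image_max {α β : Type*} [ConditionallyCompleteLinearOrder β] {s : Set α}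
    {u v : α → β} (hu : BddAbove (u '' s)) (hv : BddAbove (v '' s)) :
    sSup ((fun x => max (u x) (v x)) '' s) = max (sSup (u '' s)) (sSup (v '' s)) := by
  rw [image_eq_range] at hu hv
  simp only [sSup_image']
  exact ciSup_sup_eq hu hv

theorem MonotoneOn.continuousOn_of_image_eq {α β : Type*} [LinearOrder α] [TopologicalSpace α]
    [OrderTopology α] [LinearOrder β] [TopologicalSpace β] [OrderTopology β] [DenselyOrdered β]
    {s : Set α} {t : Set β} [s.OrdConnected] [t.OrdConnected] {f : α → β}
    (hf : MonotoneOn f s) (himg : f '' s = t) : ContinuousOn f s := by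
  rw [continuousOn_iff_continuous_domRestrict]
  let g : s → t := fun x => ⟨f x, himg ▸ mem_image_of_mem f x.2⟩
  have hg : Continuous g :=
    Monotone.continuous_of_surjective (fun x y hxy => hf x.2 y.2 hxy) fun y => by
      obtain ⟨x, hx, hxy⟩ : y.1 ∈ f '' s := himg ▸ y.2
      exact ⟨⟨x, hx⟩, Subtype.ext hxy⟩
  exact continuous_subtype_val.comp hg

theorem continuous_of_add_le_of_smul {E : Type*} [NormedAddCommGroup E] [NormedSpace ℝ E]
    [FiniteDimensional ℝ E] {L : E → ℝ} (hLadd : ∀ p q, L (p + q) ≤ L p + L q)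
    (hLsmul : ∀ (k : ℝ) p, L (k • p) = |k| * L p) : Continuous L :=
  (Seminorm.of L hLadd hLsmul).convexOn.locallyLipschitz.continuous

def IsRetiming (r : ℝ → ℝ) (a b c e : ℝ) : Prop :=
  ContinuousOn r (Icc a b) ∧ StrictMonoOn r (Icc a b) ∧ r '' Icc a b = Icc c e

namespace IsRetiming

variable {r s : ℝ → ℝ} {a b c e x y : ℝ}

theorem of_strictMonoOn (hr : StrictMonoOn r (Icc a b)) (himg : r '' Icc a b = Icc c e) :
    IsRetiming r a b c e :=
  ⟨hr.monotoneOn.continuousOn_of_image_eq himg, hr, himg⟩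

theorem mapsTo (hr : IsRetiming r a b c e) : MapsTo r (Icc a b) (Icc c e) :=
  hr.2.2 ▸ mapsTo_image r _

theorem comp (hs : IsRetiming s c e x y) (hr : IsRetiming r a b c e) :
    IsRetiming (s ∘ r) a b x y :=
  of_strictMonoOn (hs.2.1.comp hr.2.1 hr.mapsTo) (by rw [image_comp, hr.2.2, hs.2.2])

theorem invFunOn_apply (hr : IsRetiming r a b c e) {t : ℝ} (ht : t ∈ Icc a b) :
    Function.invFunOn r (Icc a b) (r t) = t :=
  hr.2.1.injOn.leftInvOn_invFunOn ht

theorem invFunOn (hr : IsRetiming r a b c e) :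
    IsRetiming (Function.invFunOn r (Icc a b)) c e a b := by
  have hbij : BijOn r (Icc a b) (Icc c e) :=
    ⟨hr.mapsTo, hr.2.1.injOn, hr.2.2.symm.subset⟩
  have hinv := hbij.invOn_invFunOn
  have hbij' : BijOn (Function.invFunOn r (Icc a b)) (Icc c e) (Icc a b) :=
    hinv.symm.bijOn hbij.surjOn.mapsTo_invFunOn hr.mapsTo
  refine of_strictMonoOn (fun u hu v hv huv => ?_) hbij'.image_eq
  rw [← hr.2.1.lt_iff_lt (hbij'.mapsTo hu) (hbij'.mapsTo hv), hinv.2 hu, hinv.2 hv]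
  exact huv

end IsRetiming

theorem isRetiming_lineMap {a b : ℝ} (hab : a < b) :
    IsRetiming (AffineMap.lineMap a b) 0 1 a b :=
  .of_strictMonoOn (fun _ _ _ _ h => (lineMap_lt_lineMap_iff_of_lt h).2 hab)
    (by rw [← segment_eq_image_lineMap, segment_eq_Icc hab.le])

theorem IsRetiming.exists_reparametrization {r : ℝ → ℝ} {a b c e : ℝ} (hab : a < b)
    (hr : IsRetiming r a b c e) :
    ∃ α₁ α₂, IsRetiming α₁ 0 1 a b ∧ IsRetiming α₂ 0 1 c e ∧
      (fun θ => (α₁ θ, α₂ θ)) '' Icc 0 1 = (fun t => (t, r t)) '' Icc a b := by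
  have hline := isRetiming_lineMap hab
  refine ⟨_, _, hline, hr.comp hline, ?_⟩
  rw [← hline.2.2, image_image]
  rfl

theorem exists_isRetiming_of_reparametrization {α₁ α₂ : ℝ → ℝ} {a b c e x y : ℝ}
    (h₁ : IsRetiming α₁ x y a b) (h₂ : IsRetiming α₂ x y c e) :
    ∃ r, IsRetiming r a b c e ∧
      (fun t => (t, r t)) '' Icc a b = (fun θ => (α₁ θ, α₂ θ)) '' Icc x y := by
  refine ⟨α₂ ∘ Function.invFunOn α₁ (Icc x y), h₂.comp h₁.invFunOn, ?_⟩
  rw [← h₁.2.2, image_image]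
  exact image_congr fun θ hθ => by simp [h₁.invFunOn_apply hθ]

theorem IsRetiming.max_sSup_eq_sSup_image_graph {E : Type*} [TopologicalSpace E] [Sub E]
    [ContinuousSub E] {L : E → ℝ} (hL : Continuous L) {f g : ℝ → E} {r : ℝ → ℝ} {a b c e : ℝ}
    (hr : IsRetiming r a b c e) (hf : ContinuousOn f (Icc a b)) (hg : ContinuousOn g (Icc c e)) :
    max (sSup ((fun t => |r t - t|) '' Icc a b)) (sSup ((fun t => L (f t - g (r t))) '' Icc a b))
      = sSup ((fun p : ℝ × ℝ => max (L (f p.1 - g p.2)) |p.1 - p.2|) ''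
          ((fun t => (t, r t)) '' Icc a b)) := by
  have hdist : ContinuousOn (fun t => |t - r t|) (Icc a b) := (continuousOn_id.sub hr.1).abs
  have hcost : ContinuousOn (fun t => L (f t - g (r t))) (Icc a b) :=
    hL.comp_continuousOn (hf.sub (hg.comp hr.1 hr.mapsTo))
  rw [image_image, sSup_image_max (isCompact_Icc.bddAbove_image hcost)
    (isCompact_Icc.bddAbove_image hdist), max_comm]
  simp only [abs_sub_comm]

theorem skorokhod_eq_frechet_general (d : ℕ) (a b c e : ℝ) (hab : a < b)
    (L : (Fin d → ℝ) → ℝ)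
    (hLsmul : ∀ (k : ℝ) p, L (k • p) = |k| * L p)
    (hLadd : ∀ p q, L (p + q) ≤ L p + L q)
    (f g : ℝ → Fin d → ℝ)
    (hf : ContinuousOn f (Set.Icc a b)) (hg : ContinuousOn g (Set.Icc c e)) :
    sInf {v : ℝ | ∃ r : ℝ → ℝ,
        ContinuousOn r (Set.Icc a b) ∧ StrictMonoOn r (Set.Icc a b) ∧
        r '' Set.Icc a b = Set.Icc c e ∧
        v = max (sSup ((fun t => |r t - t|) '' Set.Icc a b))
                (sSup ((fun t => L (f t - g (r t))) '' Set.Icc a b))}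
      =
    sInf {v : ℝ | ∃ α1 α2 : ℝ → ℝ,
        ContinuousOn α1 (Set.Icc (0:ℝ) 1) ∧ StrictMonoOn α1 (Set.Icc (0:ℝ) 1) ∧
        α1 '' Set.Icc (0:ℝ) 1 = Set.Icc a b ∧
        ContinuousOn α2 (Set.Icc (0:ℝ) 1) ∧ StrictMonoOn α2 (Set.Icc (0:ℝ) 1) ∧
        α2 '' Set.Icc (0:ℝ) 1 = Set.Icc c e ∧
        v = sSup ((fun θ => max (L (f (α1 θ) - g (α2 θ))) |α1 θ - α2 θ|) ''
              Set.Icc (0:ℝ) 1)} := by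
  have hL := continuous_of_add_le_of_smul hLadd hLsmul
  congr 1
  ext v
  constructor
  · rintro ⟨r, hrc, hrm, hri, rfl⟩
    have hr : IsRetiming r a b c e := ⟨hrc, hrm, hri⟩
    obtain ⟨α₁, α₂, ⟨h₁c, h₁m, h₁i⟩, ⟨h₂c, h₂m, h₂i⟩, hgraph⟩ := hr.exists_reparametrization hab
    refine ⟨α₁, α₂, h₁c, h₁m, h₁i, h₂c, h₂m, h₂i, ?_⟩
    rw [hr.max_sSup_eq_sSup_image_graph hL hf hg, ← hgraph, image_image]
  · rintro ⟨α₁, α₂, h₁c, h₁m, h₁i, h₂c, h₂m, h₂i, rfl⟩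
    obtain ⟨r, hr, hgraph⟩ :=
      exists_isRetiming_of_reparametrization ⟨h₁c, h₁m, h₁i⟩ ⟨h₂c, h₂m, h₂i⟩
    refine ⟨r, hr.1, hr.2.1, hr.2.2, ?_⟩
    rw [hr.max_sSup_eq_sSup_image_graph hL hf hg, hgraph, image_image]

/-- The Skorokhod distance between two continuous traces equals the Fréchet
distance between their time-explicit curves, with the norm
`‖(p,t)‖ = max (L p) |t|` on `ℝ^(d+1)`. -/
theorem skorokhod_eq_frechet (d : ℕ) (a b c e : ℝ) (hab : a < b) (hce : c < e)
    (L : (Fin d → ℝ) → ℝ)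
    (hL0 : ∀ p, L p = 0 ↔ p = 0)
    (hLsmul : ∀ (k : ℝ) p, L (k • p) = |k| * L p)
    (hLadd : ∀ p q, L (p + q) ≤ L p + L q)
    (f g : ℝ → Fin d → ℝ)
    (hf : ContinuousOn f (Set.Icc a b)) (hg : ContinuousOn g (Set.Icc c e)) :
    sInf {v : ℝ | ∃ r : ℝ → ℝ,
        ContinuousOn r (Set.Icc a b) ∧ StrictMonoOn r (Set.Icc a b) ∧
        r '' Set.Icc a b = Set.Icc c e ∧
        v = max (sSup ((fun t => |r t - t|) '' Set.Icc a b))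
                (sSup ((fun t => L (f t - g (r t))) '' Set.Icc a b))}
      =
    sInf {v : ℝ | ∃ α1 α2 : ℝ → ℝ,
        ContinuousOn α1 (Set.Icc (0:ℝ) 1) ∧ StrictMonoOn α1 (Set.Icc (0:ℝ) 1) ∧
        α1 '' Set.Icc (0:ℝ) 1 = Set.Icc a b ∧
        ContinuousOn α2 (Set.Icc (0:ℝ) 1) ∧ StrictMonoOn α2 (Set.Icc (0:ℝ) 1) ∧
        α2 '' Set.Icc (0:ℝ) 1 = Set.Icc c e ∧
        v = sSup ((fun θ => max (L (f (α1 θ) - g (α2 θ))) |α1 θ - α2 θ|) ''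
              Set.Icc (0:ℝ) 1)} :=
  skorokhod_eq_frechet_general d a b c e hab L hLsmul hLadd f g hf hg
end

section
/- Convexity of the Φ_min free space for a single cell: let R_a(ρ) = (1−ρ)·P_a^0 + ρ·P_a^1 and R_b(ρ) = (1−ρ)·P_b^0 + ρ·P_b^1 be linear interpolations of nonempty convex compact sets in ℝ^n. For δ ≥ 0, the set { (ρ_a, ρ_b) ∈ [0,1]² : min_{p ∈ R_a(ρ_a), q ∈ R_b(ρ_b)} ‖p − q‖ ≤ δ } is convex. -/
/-!
The minimal distance `d(A, B)` between compact nonempty sets satisfies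
`d(a • A + b • A', a • B + b • B') ≤ a d(A, B) + b d(A', B')` for `a, b ≥ 0`: combine the two
pairs of minimizers. For convex `P, Q` the interpolation `r ↦ (1 - r) • P + r • Q` is affine
on `[0, 1]` in the Minkowski sense, because `s • P + t • P = (s + t) • P` for `s, t ≥ 0`.
Hence `ρ ↦ d(R_a(ρ.1), R_b(ρ.2))` is convex on `[0, 1]²`, and its sublevel sets are convex.
-/

open Pointwise Set

section

variable {E : Type*} [SeminormedAddCommGroup E]

noncomputable def minDist (A B : Set E) : ℝ :=
  sInf ((fun pq : E × E => ‖pq.1 - pq.2‖) '' (A ×ˢ B))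

theorem minDist_le {A B : Set E} {p q : E} (hp : p ∈ A) (hq : q ∈ B) :
    minDist A B ≤ ‖p - q‖ :=
  csInf_le ⟨0, by rintro _ ⟨pq, -, rfl⟩; exact norm_nonneg _⟩ ⟨(p, q), ⟨hp, hq⟩, rfl⟩

theorem IsCompact.exists_minDist_eq {A B : Set E} (hA : IsCompact A) (hB : IsCompact B)
    (hA' : A.Nonempty) (hB' : B.Nonempty) : ∃ p ∈ A, ∃ q ∈ B, minDist A B = ‖p - q‖ := by
  obtain ⟨⟨p, q⟩, ⟨hp, hq⟩, h⟩ := (hA.prod hB).exists_sInf_image_eq (hA'.prod hB')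
    (continuous_fst.sub continuous_snd).norm.continuousOn
  exact ⟨p, hp, q, hq, h⟩

variable [NormedSpace ℝ E]

theorem minDist_smul_add_smul_le {A A' B B' : Set E} (hA : IsCompact A) (hA' : IsCompact A')
    (hB : IsCompact B) (hB' : IsCompact B') (hAne : A.Nonempty) (hA'ne : A'.Nonempty)
    (hBne : B.Nonempty) (hB'ne : B'.Nonempty) {a b : ℝ} (ha : 0 ≤ a) (hb : 0 ≤ b) :
    minDist (a • A + b • A') (a • B + b • B') ≤ a * minDist A B + b * minDist A' B' := by
  obtain ⟨p, hp, q, hq, hpq⟩ := hA.exists_minDist_eq hB hAne hBne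
  obtain ⟨p', hp', q', hq', hpq'⟩ := hA'.exists_minDist_eq hB' hA'ne hB'ne
  calc minDist (a • A + b • A') (a • B + b • B')
      ≤ ‖(a • p + b • p') - (a • q + b • q')‖ :=
        minDist_le (add_mem_add (smul_mem_smul_set hp) (smul_mem_smul_set hp'))
          (add_mem_add (smul_mem_smul_set hq) (smul_mem_smul_set hq'))
    _ = ‖a • (p - q) + b • (p' - q')‖ := by congr 1; module
    _ ≤ a * ‖p - q‖ + b * ‖p' - q'‖ :=
        norm_add_le_of_le (norm_smul_of_nonneg ha _).le (norm_smul_of_nonneg hb _).le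
    _ = a * minDist A B + b * minDist A' B' := by rw [hpq, hpq']

def minkowskiInterp (P Q : Set E) (r : ℝ) : Set E :=
  (1 - r) • P + r • Q

theorem IsCompact.minkowskiInterp {P Q : Set E} (hP : IsCompact P) (hQ : IsCompact Q) (r : ℝ) :
    IsCompact (minkowskiInterp P Q r) :=
  (hP.smul _).add (hQ.smul _)

theorem Set.Nonempty.minkowskiInterp {P Q : Set E} (hP : P.Nonempty) (hQ : Q.Nonempty) (r : ℝ) :
    (minkowskiInterp P Q r).Nonempty :=
  hP.smul_set.add hQ.smul_set

theorem Convex.smul_minkowskiInterp_add_smul {P Q : Set E} (hP : Convex ℝ P) (hQ : Convex ℝ Q)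
    {ρ σ : ℝ} (hρ : ρ ∈ Icc (0 : ℝ) 1) (hσ : σ ∈ Icc (0 : ℝ) 1) {a b : ℝ} (ha : 0 ≤ a)
    (hb : 0 ≤ b) (hab : a + b = 1) :
    a • minkowskiInterp P Q ρ + b • minkowskiInterp P Q σ = minkowskiInterp P Q (a * ρ + b * σ) := by
  have h1ρ : 0 ≤ 1 - ρ := sub_nonneg.2 hρ.2
  have h1σ : 0 ≤ 1 - σ := sub_nonneg.2 hσ.2
  rw [minkowskiInterp, minkowskiInterp, minkowskiInterp, smul_add, smul_add, smul_smul, smul_smul,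
    smul_smul, smul_smul, add_add_add_comm, ← hP.add_smul (mul_nonneg ha h1ρ) (mul_nonneg hb h1σ),
    ← hQ.add_smul (mul_nonneg ha hρ.1) (mul_nonneg hb hσ.1)]
  congr 2
  linear_combination hab

theorem convexOn_minDist_minkowskiInterp {Pa0 Pa1 Pb0 Pb1 : Set E}
    (ha0 : Pa0.Nonempty) (ha1 : Pa1.Nonempty) (hb0 : Pb0.Nonempty) (hb1 : Pb1.Nonempty)
    (hca0 : Convex ℝ Pa0) (hca1 : Convex ℝ Pa1) (hcb0 : Convex ℝ Pb0) (hcb1 : Convex ℝ Pb1)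
    (hka0 : IsCompact Pa0) (hka1 : IsCompact Pa1) (hkb0 : IsCompact Pb0) (hkb1 : IsCompact Pb1) :
    ConvexOn ℝ (Icc (0 : ℝ) 1 ×ˢ Icc (0 : ℝ) 1) fun ρ : ℝ × ℝ =>
      minDist (minkowskiInterp Pa0 Pa1 ρ.1) (minkowskiInterp Pb0 Pb1 ρ.2) := by
  refine ⟨(convex_Icc 0 1).prod (convex_Icc 0 1), ?_⟩
  rintro ρ ⟨hρa, hρb⟩ σ ⟨hσa, hσb⟩ a b ha hb hab
  simp only [Prod.fst_add, Prod.snd_add, Prod.smul_fst, Prod.smul_snd, smul_eq_mul]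
  rw [← hca0.smul_minkowskiInterp_add_smul hca1 hρa hσa ha hb hab,
    ← hcb0.smul_minkowskiInterp_add_smul hcb1 hρb hσb ha hb hab]
  exact minDist_smul_add_smul_le (hka0.minkowskiInterp hka1 _) (hka0.minkowskiInterp hka1 _)
    (hkb0.minkowskiInterp hkb1 _) (hkb0.minkowskiInterp hkb1 _) (ha0.minkowskiInterp ha1 _)
    (ha0.minkowskiInterp ha1 _) (hb0.minkowskiInterp hb1 _) (hb0.minkowskiInterp hb1 _) ha hb

end

theorem phiMin_freeSpace_convex_general {E : Type*} [NormedAddCommGroup E]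
    [NormedSpace ℝ E]
    (Pa0 Pa1 Pb0 Pb1 : Set E)
    (ha0 : Pa0.Nonempty) (ha1 : Pa1.Nonempty) (hb0 : Pb0.Nonempty) (hb1 : Pb1.Nonempty)
    (hca0 : Convex ℝ Pa0) (hca1 : Convex ℝ Pa1) (hcb0 : Convex ℝ Pb0) (hcb1 : Convex ℝ Pb1)
    (hka0 : IsCompact Pa0) (hka1 : IsCompact Pa1) (hkb0 : IsCompact Pb0) (hkb1 : IsCompact Pb1)
    (δ : ℝ) :
    Convex ℝ {ρ : ℝ × ℝ | ρ ∈ Set.Icc (0:ℝ) 1 ×ˢ Set.Icc (0:ℝ) 1 ∧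
      sInf ((fun pq : E × E => ‖pq.1 - pq.2‖) ''
        (((1 - ρ.1) • Pa0 + ρ.1 • Pa1) ×ˢ ((1 - ρ.2) • Pb0 + ρ.2 • Pb1))) ≤ δ} :=
  (convexOn_minDist_minkowskiInterp ha0 ha1 hb0 hb1 hca0 hca1 hcb0 hcb1 hka0 hka1 hkb0
    hkb1).convex_le δ

/-- Convexity of the `Φ_min` free space for a single cell. -/
theorem phiMin_freeSpace_convex {E : Type*} [NormedAddCommGroup E]
    [NormedSpace ℝ E] [FiniteDimensional ℝ E]
    (Pa0 Pa1 Pb0 Pb1 : Set E)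
    (ha0 : Pa0.Nonempty) (ha1 : Pa1.Nonempty) (hb0 : Pb0.Nonempty) (hb1 : Pb1.Nonempty)
    (hca0 : Convex ℝ Pa0) (hca1 : Convex ℝ Pa1) (hcb0 : Convex ℝ Pb0) (hcb1 : Convex ℝ Pb1)
    (hka0 : IsCompact Pa0) (hka1 : IsCompact Pa1) (hkb0 : IsCompact Pb0) (hkb1 : IsCompact Pb1)
    (δ : ℝ) (hδ : 0 ≤ δ) :
    Convex ℝ {ρ : ℝ × ℝ | ρ ∈ Set.Icc (0:ℝ) 1 ×ˢ Set.Icc (0:ℝ) 1 ∧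
      sInf ((fun pq : E × E => ‖pq.1 - pq.2‖) ''
        (((1 - ρ.1) • Pa0 + ρ.1 • Pa1) ×ˢ ((1 - ρ.2) • Pb0 + ρ.2 • Pb1))) ≤ δ} :=
  phiMin_freeSpace_convex_general Pa0 Pa1 Pb0 Pb1 ha0 ha1 hb0 hb1 hca0 hca1 hcb0 hcb1 hka0 hka1 hkb0
    hkb1 δ
end

section
/- Convexity of the Φ_max free space for a single cell: with R_a, R_b as linear interpolations R_a(ρ) = (1−ρ)·P_a^0 + ρ·P_a^1 and R_b(ρ) = (1−ρ)·P_b^0 + ρ·P_b^1 of nonempty convex compact sets in ℝ^n, and δ ≥ 0, the set { (ρ_a, ρ_b) ∈ [0,1]² : max_{p ∈ R_a(ρ_a), q ∈ R_b(ρ_b)} ‖p − q‖ ≤ δ } is convex. -/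
open Pointwise Set

/-! For convex `s₀, s₁` the interpolation `ρ ↦ (1 - ρ) • s₀ + ρ • s₁` is affine on `[0, 1]` with
respect to Minkowski convex combinations (this is where convexity enters: `(p + q) • s = p • s + q • s`).
Since the sets are compact, the maximum condition says that every pair of points is `δ`-close,
and this property passes from two pairs of sets to their Minkowski convex combination by the
triangle inequality. -/

theorem Convex.interpolate_convexCombo {𝕜 E : Type*} [Field 𝕜] [LinearOrder 𝕜]
    [IsStrictOrderedRing 𝕜] [AddCommGroup E] [Module 𝕜 E] {s₀ s₁ : Set E}
    (h₀ : Convex 𝕜 s₀) (h₁ : Convex 𝕜 s₁) {ρ σ a b : 𝕜}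
    (hρ : ρ ∈ Icc 0 1) (hσ : σ ∈ Icc 0 1) (ha : 0 ≤ a) (hb : 0 ≤ b) (hab : a + b = 1) :
    (1 - (a * ρ + b * σ)) • s₀ + (a * ρ + b * σ) • s₁ =
      a • ((1 - ρ) • s₀ + ρ • s₁) + b • ((1 - σ) • s₀ + σ • s₁) := by
  have hcoeff : 1 - (a * ρ + b * σ) = a * (1 - ρ) + b * (1 - σ) := by
    linear_combination -hab
  rw [hcoeff, h₀.add_smul (mul_nonneg ha (sub_nonneg.2 hρ.2)) (mul_nonneg hb (sub_nonneg.2 hσ.2)),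
    h₁.add_smul (mul_nonneg ha hρ.1) (mul_nonneg hb hσ.1)]
  simp only [smul_add, smul_smul]
  abel

theorem sSup_norm_sub_image_prod_le_iff {E : Type*} [SeminormedAddCommGroup E] {A B : Set E}
    (hA : IsCompact A) (hB : IsCompact B) {δ : ℝ} (hδ : 0 ≤ δ) :
    sSup ((fun pq : E × E => ‖pq.1 - pq.2‖) '' (A ×ˢ B)) ≤ δ ↔ ∀ p ∈ A, ∀ q ∈ B, ‖p - q‖ ≤ δ := by
  have hbdd : BddAbove ((fun pq : E × E => ‖pq.1 - pq.2‖) '' (A ×ˢ B)) :=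
    ((hA.prod hB).image (by fun_prop)).bddAbove
  refine ⟨fun h p hp q hq => (le_csSup hbdd ⟨(p, q), ⟨hp, hq⟩, rfl⟩).trans h, fun h => ?_⟩
  exact Real.sSup_le (forall_mem_image.2 fun pq hpq => h _ hpq.1 _ hpq.2) hδ

theorem norm_sub_le_of_mem_smul_add_smul {E : Type*} [SeminormedAddCommGroup E]
    [NormedSpace ℝ E] {A A' B B' : Set E} {a b δ : ℝ} (ha : 0 ≤ a) (hb : 0 ≤ b) (hab : a + b = 1)
    (h : ∀ p ∈ A, ∀ q ∈ B, ‖p - q‖ ≤ δ) (h' : ∀ p ∈ A', ∀ q ∈ B', ‖p - q‖ ≤ δ) :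
    ∀ p ∈ a • A + b • A', ∀ q ∈ a • B + b • B', ‖p - q‖ ≤ δ := by
  rintro _ ⟨_, ⟨p, hp, rfl⟩, _, ⟨p', hp', rfl⟩, rfl⟩ _ ⟨_, ⟨q, hq, rfl⟩, _, ⟨q', hq', rfl⟩, rfl⟩
  calc ‖a • p + b • p' - (a • q + b • q')‖ = ‖a • (p - q) + b • (p' - q')‖ := by
        congr 1; module
    _ ≤ a * ‖p - q‖ + b * ‖p' - q'‖ := by
        refine (norm_add_le _ _).trans_eq ?_
        rw [norm_smul_of_nonneg ha, norm_smul_of_nonneg hb]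
    _ ≤ a * δ + b * δ :=
        add_le_add (mul_le_mul_of_nonneg_left (h p hp q hq) ha)
          (mul_le_mul_of_nonneg_left (h' p' hp' q' hq') hb)
    _ = δ := by rw [← add_mul, hab, one_mul]

theorem phiMax_freeSpace_convex_general {E : Type*} [NormedAddCommGroup E]
    [NormedSpace ℝ E]
    (Pa0 Pa1 Pb0 Pb1 : Set E)
    (hca0 : Convex ℝ Pa0) (hca1 : Convex ℝ Pa1) (hcb0 : Convex ℝ Pb0) (hcb1 : Convex ℝ Pb1)
    (hka0 : IsCompact Pa0) (hka1 : IsCompact Pa1) (hkb0 : IsCompact Pb0) (hkb1 : IsCompact Pb1)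
    (δ : ℝ) (hδ : 0 ≤ δ) :
    Convex ℝ {ρ : ℝ × ℝ | ρ ∈ Set.Icc (0:ℝ) 1 ×ˢ Set.Icc (0:ℝ) 1 ∧
      sSup ((fun pq : E × E => ‖pq.1 - pq.2‖) ''
        (((1 - ρ.1) • Pa0 + ρ.1 • Pa1) ×ˢ ((1 - ρ.2) • Pb0 + ρ.2 • Pb1))) ≤ δ} := by
  intro x ⟨hx, hxδ⟩ y ⟨hy, hyδ⟩ a b ha hb hab
  have hRa (ρ : ℝ) : IsCompact ((1 - ρ) • Pa0 + ρ • Pa1) := (hka0.smul _).add (hka1.smul _)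
  have hRb (ρ : ℝ) : IsCompact ((1 - ρ) • Pb0 + ρ • Pb1) := (hkb0.smul _).add (hkb1.smul _)
  refine ⟨(convex_Icc 0 1).prod (convex_Icc 0 1) hx hy ha hb hab, ?_⟩
  rw [sSup_norm_sub_image_prod_le_iff (hRa _) (hRb _) hδ] at hxδ hyδ ⊢
  simp only [Prod.fst_add, Prod.snd_add, Prod.smul_fst, Prod.smul_snd, smul_eq_mul]
  rw [hca0.interpolate_convexCombo hca1 hx.1 hy.1 ha hb hab,
    hcb0.interpolate_convexCombo hcb1 hx.2 hy.2 ha hb hab]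
  exact norm_sub_le_of_mem_smul_add_smul ha hb hab hxδ hyδ

/-- Convexity of the `Φ_max` free space for a single cell. -/
theorem phiMax_freeSpace_convex {E : Type*} [NormedAddCommGroup E]
    [NormedSpace ℝ E] [FiniteDimensional ℝ E]
    (Pa0 Pa1 Pb0 Pb1 : Set E)
    (ha0 : Pa0.Nonempty) (ha1 : Pa1.Nonempty) (hb0 : Pb0.Nonempty) (hb1 : Pb1.Nonempty)
    (hca0 : Convex ℝ Pa0) (hca1 : Convex ℝ Pa1) (hcb0 : Convex ℝ Pb0) (hcb1 : Convex ℝ Pb1)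
    (hka0 : IsCompact Pa0) (hka1 : IsCompact Pa1) (hkb0 : IsCompact Pb0) (hkb1 : IsCompact Pb1)
    (δ : ℝ) (hδ : 0 ≤ δ) :
    Convex ℝ {ρ : ℝ × ℝ | ρ ∈ Set.Icc (0:ℝ) 1 ×ˢ Set.Icc (0:ℝ) 1 ∧
      sSup ((fun pq : E × E => ‖pq.1 - pq.2‖) ''
        (((1 - ρ.1) • Pa0 + ρ.1 • Pa1) ×ˢ ((1 - ρ.2) • Pb0 + ρ.2 • Pb1))) ≤ δ} :=
  phiMax_freeSpace_convex_general Pa0 Pa1 Pb0 Pb1 hca0 hca1 hcb0 hcb1 hka0 hka1 hkb0 hkb1 δ hδ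
end

section
/- Concatenated reparameterization upper bound: let R1 : {0,…,m1} and R2 : {0,…,m2} be sequences of nonempty convex compact subsets of ℝ^n with m2 ≥ m1, extended to [0,m1], [0,m2] by linear interpolation R(t) = (1−(t−k))·R(k) + (t−k)·R(k+1) for t ∈ [k,k+1]. Then dvar†(R1,R2) ≤ max( max_{0≤i≤m1} Φ_max(R1(i), R2(i)), max_{m1≤j≤m2} Φ_max(R1(m1), R2(j)) ), where Φ_max(A,B) = max_{a∈A,b∈B}‖a−b‖ and dvar† is the infimum over non-decreasing surjective reparameterization pairs of the sup over θ of Φ_max(R1(α1(θ)), R2(α2(θ))). -/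
open Pointwise

/-- Linear-interpolation extension of a finite sequence of sets to `[0, m]`. -/
noncomputable def pprInterp {E : Type*} [NormedAddCommGroup E] [NormedSpace ℝ E]
    (m : ℕ) (R : ℕ → Set E) (t : ℝ) : Set E :=
  (1 - (t - (min ⌊t⌋₊ (m - 1) : ℕ))) • R (min ⌊t⌋₊ (m - 1)) +
    (t - (min ⌊t⌋₊ (m - 1) : ℕ)) • R (min ⌊t⌋₊ (m - 1) + 1)

/-- Maximum distance between two sets. -/
noncomputable def phiMax {E : Type*} [NormedAddCommGroup E] (A B : Set E) : ℝ :=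
  sSup ((fun pq : E × E => ‖pq.1 - pq.2‖) '' (A ×ˢ B))

/-!
Reparametrize so that both sequences traverse the common index range `[0, m1]` in step, after
which `R1` rests at `R1 m1` while `R2` traverses `[m1, m2]`. On the first half each pair of
interpolated sets is the same convex combination of two consecutive diagonal pairs
`(R1 k, R2 k)`; on the second half the same holds for the pairs `(R1 m1, R2 k)`, because
`R1 m1 = (1 - s) • R1 m1 + s • R1 m1` by convexity. Finally `Φ_max` of a convex combination of
pairs is at most the larger `Φ_max` of the pairs.
-/

open Set

section PhiMax

variable {E : Type*} [NormedAddCommGroup E]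

lemma phiMax_nonneg (A B : Set E) : 0 ≤ phiMax A B :=
  Real.sSup_nonneg <| by
    rintro _ ⟨_, -, rfl⟩
    exact norm_nonneg _

lemma phiMax_le {A B : Set E} {c : ℝ} (hc : 0 ≤ c) (h : ∀ a ∈ A, ∀ b ∈ B, ‖a - b‖ ≤ c) :
    phiMax A B ≤ c :=
  Real.sSup_le (by rintro _ ⟨⟨a, b⟩, ⟨ha, hb⟩, rfl⟩; exact h a ha b hb) hc

lemma norm_sub_le_phiMax {A B : Set E} (hA : IsCompact A) (hB : IsCompact B) {a b : E}
    (ha : a ∈ A) (hb : b ∈ B) : ‖a - b‖ ≤ phiMax A B :=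
  le_csSup ((hA.prod hB).image (continuous_fst.sub continuous_snd).norm).bddAbove
    ⟨(a, b), ⟨ha, hb⟩, rfl⟩

lemma phiMax_smul_add_smul_le [NormedSpace ℝ E] {A A' B B' : Set E} (hA : IsCompact A)
    (hA' : IsCompact A') (hB : IsCompact B) (hB' : IsCompact B') {u v : ℝ} (hu : 0 ≤ u)
    (hv : 0 ≤ v) (huv : u + v = 1) :
    phiMax (u • A + v • A') (u • B + v • B') ≤ max (phiMax A B) (phiMax A' B') := by
  set M := max (phiMax A B) (phiMax A' B')
  refine phiMax_le ((phiMax_nonneg A B).trans (le_max_left _ _)) ?_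
  rintro _ ⟨_, ⟨a, ha, rfl⟩, _, ⟨a', ha', rfl⟩, rfl⟩ _ ⟨_, ⟨b, hb, rfl⟩, _, ⟨b', hb', rfl⟩, rfl⟩
  calc ‖u • a + v • a' - (u • b + v • b')‖ = ‖u • (a - b) + v • (a' - b')‖ := by
        simp only [smul_sub]; abel_nf
    _ ≤ u * ‖a - b‖ + v * ‖a' - b'‖ := by
        grw [norm_add_le, norm_smul_of_nonneg hu, norm_smul_of_nonneg hv]
    _ ≤ u * M + v * M := by
        gcongr
        · exact (norm_sub_le_phiMax hA hB ha hb).trans (le_max_left _ _)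
        · exact (norm_sub_le_phiMax hA' hB' ha' hb').trans (le_max_right _ _)
    _ = M := by rw [← add_mul, huv, one_mul]

end PhiMax

section Interp

variable {E : Type*} [NormedAddCommGroup E] [NormedSpace ℝ E]

lemma pprInterp_natCast {m : ℕ} (hm : 1 ≤ m) {R : ℕ → Set E} (hR : ∀ i ≤ m, (R i).Nonempty)
    {j : ℕ} (hj : j ≤ m) : pprInterp m R j = R j := by
  unfold pprInterp
  rw [Nat.floor_natCast]
  obtain hjm | rfl := hj.lt_or_eq
  · rw [min_eq_left (by omega), sub_self, sub_zero, one_smul,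
      zero_smul_set (hR (j + 1) (by omega)), add_zero]
  · -- at the right endpoint the last segment `[j - 1, j]` is used, with weight `1` on `R j`
    have hj1 : ((j - 1 : ℕ) : ℝ) = j - 1 := by push_cast [Nat.cast_sub hm]; ring
    rw [min_eq_right (by omega), hj1, Nat.sub_add_cancel hm, sub_sub_cancel, sub_self,
      one_smul, zero_smul_set (hR (j - 1) (by omega)), zero_add]

lemma pprInterp_of_mem_Ico {m k : ℕ} (hk : k < m) (R : ℕ → Set E) {t : ℝ}
    (ht : t ∈ Ico (k : ℝ) (k + 1)) :
    pprInterp m R t = (1 - (t - k)) • R k + (t - k) • R (k + 1) := by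
  have hfloor : ⌊t⌋₊ = k := (Nat.floor_eq_iff ((Nat.cast_nonneg k).trans ht.1)).2 ht
  unfold pprInterp
  rw [hfloor, min_eq_left (by omega)]

lemma pprInterp_const {m : ℕ} (hm : 1 ≤ m) {A : Set E} (hA : Convex ℝ A) {t : ℝ}
    (ht : t ∈ Icc 0 (m : ℝ)) : pprInterp m (fun _ => A) t = A := by
  set k := min ⌊t⌋₊ (m - 1)
  have hkt : (k : ℝ) ≤ t := (Nat.cast_le.2 (min_le_left _ _)).trans (Nat.floor_le ht.1)
  have htk : t ≤ k + 1 := by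
    have hm1 : ((m - 1 : ℕ) : ℝ) = m - 1 := by push_cast [Nat.cast_sub hm]; ring
    rw [Nat.cast_min, ← sub_le_iff_le_add, le_min_iff, hm1]
    constructor <;> linarith [Nat.lt_floor_add_one t, ht.2]
  change (1 - (t - k)) • A + (t - k) • A = A
  rw [← hA.add_smul (by linarith) (by linarith), sub_add_cancel, one_smul]

lemma phiMax_pprInterp_le {m m' a b : ℕ} (hm : 1 ≤ m) (hm' : 1 ≤ m') (hbm : b ≤ m)
    (hbm' : b ≤ m') {R S : ℕ → Set E} (hR : ∀ i ≤ m, (R i).Nonempty ∧ IsCompact (R i))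
    (hS : ∀ i ≤ m', (S i).Nonempty ∧ IsCompact (S i)) {c : ℝ}
    (hc : ∀ i, a ≤ i → i ≤ b → phiMax (R i) (S i) ≤ c) {t : ℝ} (ht : t ∈ Icc (a : ℝ) b) :
    phiMax (pprInterp m R t) (pprInterp m' S t) ≤ c := by
  obtain rfl | htb := ht.2.eq_or_lt
  · rw [pprInterp_natCast hm (fun i hi => (hR i hi).1) hbm,
      pprInterp_natCast hm' (fun i hi => (hS i hi).1) hbm']
    exact hc b (by exact_mod_cast ht.1) le_rfl
  have ht0 : 0 ≤ t := (Nat.cast_nonneg a).trans ht.1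
  set k := ⌊t⌋₊
  have hkt : t ∈ Ico (k : ℝ) (k + 1) := ⟨Nat.floor_le ht0, Nat.lt_floor_add_one t⟩
  have hak : a ≤ k := Nat.le_floor ht.1
  have hkb : k < b := (Nat.floor_lt ht0).2 htb
  rw [pprInterp_of_mem_Ico (by omega) R hkt, pprInterp_of_mem_Ico (by omega) S hkt]
  refine (phiMax_smul_add_smul_le (hR k (by omega)).2 (hR (k + 1) (by omega)).2
    (hS k (by omega)).2 (hS (k + 1) (by omega)).2 (by linarith [hkt.2]) (by linarith [hkt.1])
    (by ring)).trans ?_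
  exact max_le (hc k hak hkb.le) (hc (k + 1) (by omega) hkb)

end Interp

section Reparam

def IsReparam (m : ℝ) (α : ℝ → ℝ) : Prop :=
  ContinuousOn α (Icc 0 1) ∧ MonotoneOn α (Icc 0 1) ∧ α '' Icc 0 1 = Icc 0 m ∧ α 0 = 0 ∧ α 1 = m

lemma isReparam_of_continuous_of_monotone {m : ℝ} {α : ℝ → ℝ} (hc : Continuous α)
    (hmono : Monotone α) (h0 : α 0 = 0) (h1 : α 1 = m) : IsReparam m α := by
  refine ⟨hc.continuousOn, hmono.monotoneOn _, ?_, h0, h1⟩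
  rw [hc.continuousOn.image_Icc_of_monotoneOn zero_le_one (hmono.monotoneOn _), h0, h1]

noncomputable def concatReparamFst (a θ : ℝ) : ℝ := min (2 * a * θ) a

noncomputable def concatReparamSnd (a b θ : ℝ) : ℝ :=
  concatReparamFst a θ + max (2 * (b - a) * (θ - 1 / 2)) 0

variable {a b : ℝ}

lemma continuous_concatReparamFst : Continuous (concatReparamFst a) := by
  unfold concatReparamFst; fun_prop

lemma monotone_concatReparamFst (ha : 0 ≤ a) : Monotone (concatReparamFst a) :=
  fun _ _ h => min_le_min_right _ (by gcongr)

lemma isReparam_concatReparamFst (ha : 0 ≤ a) : IsReparam a (concatReparamFst a) :=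
  isReparam_of_continuous_of_monotone continuous_concatReparamFst
    (monotone_concatReparamFst ha) (by simp [concatReparamFst, ha])
    (by simp only [concatReparamFst, mul_one]; exact min_eq_right (by linarith))

lemma isReparam_concatReparamSnd (ha : 0 ≤ a) (hab : a ≤ b) :
    IsReparam b (concatReparamSnd a b) := by
  refine isReparam_of_continuous_of_monotone ?_ ?_ ?_ ?_
  · unfold concatReparamSnd
    have := continuous_concatReparamFst (a := a)
    fun_prop
  · refine (monotone_concatReparamFst ha).add fun _ _ h => max_le_max_right _ ?_
    gcongr
  · simp only [concatReparamSnd, concatReparamFst]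
    rw [min_eq_left (by linarith), max_eq_right (by nlinarith)]
    ring
  · simp only [concatReparamSnd, concatReparamFst]
    rw [min_eq_right (by linarith), max_eq_left (by nlinarith)]
    ring

lemma concatReparam_of_le_half (ha : 0 ≤ a) (hab : a ≤ b) {θ : ℝ} (hθ : θ ∈ Icc 0 (1 / 2)) :
    concatReparamSnd a b θ = concatReparamFst a θ ∧ concatReparamFst a θ ∈ Icc 0 a := by
  have hfst : concatReparamFst a θ = 2 * a * θ := min_eq_left (by nlinarith [hθ.2])
  refine ⟨?_, ?_⟩
  · rw [concatReparamSnd, max_eq_right (by nlinarith [hθ.2]), add_zero]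
  · rw [hfst]
    constructor <;> nlinarith [hθ.1, hθ.2]

lemma concatReparam_of_half_le (ha : 0 ≤ a) (hab : a ≤ b) {θ : ℝ} (hθ : θ ∈ Icc (1 / 2) 1) :
    concatReparamFst a θ = a ∧ concatReparamSnd a b θ ∈ Icc a b := by
  have hfst : concatReparamFst a θ = a := min_eq_right (by nlinarith [hθ.1])
  refine ⟨hfst, ?_⟩
  rw [concatReparamSnd, hfst, max_eq_left (by nlinarith [hθ.1])]
  constructor <;> nlinarith [hθ.1, hθ.2]

end Reparam

section DVar

variable {E : Type*} [NormedAddCommGroup E] [NormedSpace ℝ E]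

noncomputable def dvarDagger (m1 m2 : ℕ) (R1 R2 : ℕ → Set E) : ℝ :=
  sInf {v : ℝ | ∃ α1 α2 : ℝ → ℝ,
    ContinuousOn α1 (Icc 0 1) ∧ MonotoneOn α1 (Icc 0 1) ∧
    α1 '' Icc 0 1 = Icc 0 (m1 : ℝ) ∧ α1 0 = 0 ∧ α1 1 = m1 ∧
    ContinuousOn α2 (Icc 0 1) ∧ MonotoneOn α2 (Icc 0 1) ∧
    α2 '' Icc 0 1 = Icc 0 (m2 : ℝ) ∧ α2 0 = 0 ∧ α2 1 = m2 ∧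
    v = sSup ((fun θ => phiMax (pprInterp m1 R1 (α1 θ)) (pprInterp m2 R2 (α2 θ))) '' Icc 0 1)}

lemma dvarDagger_le_of_isReparam {m1 m2 : ℕ} {R1 R2 : ℕ → Set E} {α1 α2 : ℝ → ℝ}
    (h1 : IsReparam m1 α1) (h2 : IsReparam m2 α2) {c : ℝ}
    (hc : ∀ θ ∈ Icc (0 : ℝ) 1, phiMax (pprInterp m1 R1 (α1 θ)) (pprInterp m2 R2 (α2 θ)) ≤ c) :
    dvarDagger m1 m2 R1 R2 ≤ c := by
  obtain ⟨c1, mono1, img1, zero1, one1⟩ := h1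
  obtain ⟨c2, mono2, img2, zero2, one2⟩ := h2
  refine le_trans (csInf_le ⟨0, ?_⟩ ⟨α1, α2, c1, mono1, img1, zero1, one1, c2, mono2, img2, zero2,
    one2, rfl⟩) (csSup_le ((nonempty_Icc.2 zero_le_one).image _) ?_)
  · rintro _ ⟨-, -, -, -, -, -, -, -, -, -, -, -, rfl⟩
    exact Real.sSup_nonneg (by rintro _ ⟨θ, -, rfl⟩; exact phiMax_nonneg _ _)
  · rintro _ ⟨θ, hθ, rfl⟩
    exact hc θ hθ

lemma phiMax_pprInterp_concatReparam_le {m1 m2 : ℕ} (hm1 : 1 ≤ m1) (hm12 : m1 ≤ m2)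
    {R1 R2 : ℕ → Set E} (hR1 : ∀ i ≤ m1, (R1 i).Nonempty) {c1 c2 : ℝ}
    (hdiag : ∀ t ∈ Icc 0 (m1 : ℝ), phiMax (pprInterp m1 R1 t) (pprInterp m2 R2 t) ≤ c1)
    (htail : ∀ u ∈ Icc (m1 : ℝ) m2, phiMax (R1 m1) (pprInterp m2 R2 u) ≤ c2)
    {θ : ℝ} (hθ : θ ∈ Icc 0 1) :
    phiMax (pprInterp m1 R1 (concatReparamFst m1 θ)) (pprInterp m2 R2 (concatReparamSnd m1 m2 θ))
      ≤ max c1 c2 := by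
  have hm12' : (m1 : ℝ) ≤ m2 := by exact_mod_cast hm12
  rcases le_total θ (1 / 2) with h | h
  · obtain ⟨heq, hmem⟩ := concatReparam_of_le_half (Nat.cast_nonneg m1) hm12' ⟨hθ.1, h⟩
    rw [heq]
    exact (hdiag _ hmem).trans (le_max_left _ _)
  · obtain ⟨heq, hmem⟩ := concatReparam_of_half_le (Nat.cast_nonneg m1) hm12' ⟨h, hθ.2⟩
    rw [heq, pprInterp_natCast hm1 hR1 le_rfl]
    exact (htail _ hmem).trans (le_max_right _ _)

end DVar

/-- Concatenated reparameterization upper bound: `dvar†(R1, R2)` is bounded by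
the maximum of the diagonal comparisons `Φ_max (R1 i) (R2 i)` for `i ≤ m1` and
the tail comparisons `Φ_max (R1 m1) (R2 j)` for `m1 ≤ j ≤ m2`. -/
theorem dvar_dagger_concat_bound {E : Type*} [NormedAddCommGroup E]
    [NormedSpace ℝ E]
    (m1 m2 : ℕ) (hm1 : 1 ≤ m1) (hm12 : m1 ≤ m2)
    (R1 R2 : ℕ → Set E)
    (hR1 : ∀ i ≤ m1, (R1 i).Nonempty ∧ Convex ℝ (R1 i) ∧ IsCompact (R1 i))
    (hR2 : ∀ j ≤ m2, (R2 j).Nonempty ∧ Convex ℝ (R2 j) ∧ IsCompact (R2 j)) :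
    sInf {v : ℝ | ∃ α1 α2 : ℝ → ℝ,
        ContinuousOn α1 (Set.Icc (0:ℝ) 1) ∧ MonotoneOn α1 (Set.Icc (0:ℝ) 1) ∧
        α1 '' Set.Icc (0:ℝ) 1 = Set.Icc 0 (m1:ℝ) ∧ α1 0 = 0 ∧ α1 1 = m1 ∧
        ContinuousOn α2 (Set.Icc (0:ℝ) 1) ∧ MonotoneOn α2 (Set.Icc (0:ℝ) 1) ∧
        α2 '' Set.Icc (0:ℝ) 1 = Set.Icc 0 (m2:ℝ) ∧ α2 0 = 0 ∧ α2 1 = m2 ∧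
        v = sSup ((fun θ =>
              phiMax (pprInterp m1 R1 (α1 θ)) (pprInterp m2 R2 (α2 θ))) ''
            Set.Icc (0:ℝ) 1)}
      ≤
    max ((Finset.range (m1 + 1)).sup' (by simp) (fun i => phiMax (R1 i) (R2 i)))
        ((Finset.Icc m1 m2).sup' (by simp [hm12]) (fun j => phiMax (R1 m1) (R2 j))) := by
  have hm2 : 1 ≤ m2 := hm1.trans hm12
  have hR1' i (hi : i ≤ m1) := And.intro (hR1 i hi).1 (hR1 i hi).2.2
  have hR2' j (hj : j ≤ m2) := And.intro (hR2 j hj).1 (hR2 j hj).2.2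
  have hdiag : ∀ t ∈ Icc 0 (m1 : ℝ), phiMax (pprInterp m1 R1 t) (pprInterp m2 R2 t) ≤
      (Finset.range (m1 + 1)).sup' (by simp) (fun i => phiMax (R1 i) (R2 i)) :=
    fun t ht => phiMax_pprInterp_le (a := 0) (b := m1) hm1 hm2 le_rfl hm12 hR1' hR2'
      (fun i _ hi => Finset.le_sup' (fun i => phiMax (R1 i) (R2 i)) (by simp; omega))
      (by simpa using ht)
  have htail : ∀ u ∈ Icc (m1 : ℝ) m2, phiMax (R1 m1) (pprInterp m2 R2 u) ≤
      (Finset.Icc m1 m2).sup' (by simp [hm12]) (fun j => phiMax (R1 m1) (R2 j)) := fun u hu => by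
    nth_rw 1 [← pprInterp_const hm2 (hR1 m1 le_rfl).2.1 ⟨(Nat.cast_nonneg m1).trans hu.1, hu.2⟩]
    exact phiMax_pprInterp_le hm2 hm2 le_rfl le_rfl (fun _ _ => hR1' m1 le_rfl) hR2'
      (fun j hj hj' => Finset.le_sup' (fun j => phiMax (R1 m1) (R2 j))
        (Finset.mem_Icc.2 ⟨hj, hj'⟩)) hu
  exact dvarDagger_le_of_isReparam (isReparam_concatReparamFst (Nat.cast_nonneg m1))
    (isReparam_concatReparamSnd (Nat.cast_nonneg m1) (by exact_mod_cast hm12))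
    fun θ hθ => phiMax_pprInterp_concatReparam_le hm1 hm12 (fun i hi => (hR1 i hi).1) hdiag htail hθ
end
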